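/- Event model composition UCOM is valid: for pointed event models (E,e) and (E',e'), M,w,σ ⊨ [E,e][E',e']φ ↔ [E∘E',(e,e')]φ, where E∘E' has events E×E', relations (e,e')↣''_i(f,f') iff e↣_i f and e'↣'_i f', and preconditions Pre''(e,e') = Pre(e) ∧ [E,e]Pre'(e'). -/
import Mathlib


inductive Term (V N : Type) where
  | var : V → Term V N
  | name : N → Term V N

/-- Formulas of DEL with assignments.  The constructor `upd n rel pre e φ`
is the event-update modality [E,e]φ for the pointed event model E = (Fin n,
rel, pre) with designated event e. -/
inductive DForm (V N P I : Type) where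
  | eq : Term V N → Term V N → DForm V N P I
  | pred : P → List (Term V N) → DForm V N P I
  | neg : DForm V N P I → DForm V N P I
  | and : DForm V N P I → DForm V N P I → DForm V N P I
  | K : I → DForm V N P I → DForm V N P I
  | assign : V → Term V N → DForm V N P I → DForm V N P I
  | upd : (n : ℕ) → (I → Fin n → Fin n → Prop) → (Fin n → DForm V N P I) →
      Fin n → DForm V N P I → DForm V N P I

structure Model (W D N P I : Type) where
  R : I → W → W → Prop
  ρ : P → W → List D → Prop
  η : N → W → D

variable {V N P I D : Type}

def tval {W : Type} (M : Model W D N P I) (σ : V → D) (w : W) : Term V N → D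
  | .var x => σ x
  | .name a => M.η a w

/-- The update product (M ⊗ E)^σ: worlds are pairs (w,e) where w satisfies
the precondition of e (given by `cond`); relations are the products, and
interpretations are inherited from the first component. -/
def Model.product {W : Type} (M : Model W D N P I) (n : ℕ)
    (rel : I → Fin n → Fin n → Prop) (cond : W → Fin n → Prop) :
    Model {p : W × Fin n // cond p.1 p.2} D N P I where
  R i p q := M.R i p.1.1 q.1.1 ∧ rel i p.1.2 q.1.2
  ρ p v := M.ρ p v.1.1
  η a v := M.η a v.1.1

/-- Satisfaction for DEL with assignments. -/
def Sat [DecidableEq V] : {W : Type} → Model W D N P I → W → (V → D) →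
    DForm V N P I → Prop
  | _, M, w, σ, .eq t t' => tval M σ w t = tval M σ w t'
  | _, M, w, σ, .pred p ts => M.ρ p w (ts.map (tval M σ w))
  | _, M, w, σ, .neg φ => ¬ Sat M w σ φ
  | _, M, w, σ, .and φ ψ => Sat M w σ φ ∧ Sat M w σ ψ
  | _, M, w, σ, .K i φ => ∀ v, M.R i w v → Sat M v σ φ
  | _, M, w, σ, .assign x t φ => Sat M w (Function.update σ x (tval M σ w t)) φ
  | _, M, w, σ, .upd n rel pre e φ =>
      ∀ h : Sat M w σ (pre e),
        Sat (M.product n rel (fun v f => Sat M v σ (pre f))) ⟨(w, e), h⟩ σ φ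

/-- The composed event model E∘E': events are pairs (coded in Fin (n*n') via
finProdFinEquiv), relations are componentwise, and
Pre''(e,e') = Pre(e) ∧ [E,e]Pre'(e'). -/
def evRelComp {n n' : ℕ} (rel : I → Fin n → Fin n → Prop)
    (rel' : I → Fin n' → Fin n' → Prop) :
    I → Fin (n * n') → Fin (n * n') → Prop := fun i k l =>
  rel i (finProdFinEquiv.symm k).1 (finProdFinEquiv.symm l).1 ∧
  rel' i (finProdFinEquiv.symm k).2 (finProdFinEquiv.symm l).2

def evPreComp {n n' : ℕ} (rel : I → Fin n → Fin n → Prop)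
    (pre : Fin n → DForm V N P I) (pre' : Fin n' → DForm V N P I) :
    Fin (n * n') → DForm V N P I := fun k =>
  .and (pre (finProdFinEquiv.symm k).1)
    (.upd n rel pre (finProdFinEquiv.symm k).1 (pre' (finProdFinEquiv.symm k).2))


lemma tval_congr {W W' : Type} (M : Model W D N P I) (M' : Model W' D N P I)
    (g : W → W') (hη : ∀ a v, M.η a v = M'.η a (g v)) (σ : V → D) (w : W) :
    tval M σ w = tval M' σ (g w) := by
  funext t; cases t <;> simp [tval, hη]

lemma sat_congr [DecidableEq V] (φ : DForm V N P I) :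
    ∀ {W W' : Type} (M : Model W D N P I) (M' : Model W' D N P I) (g : W ≃ W'),
      (∀ i a b, M.R i a b ↔ M'.R i (g a) (g b)) →
      (∀ p a, M.ρ p a = M'.ρ p (g a)) →
      (∀ a v, M.η a v = M'.η a (g v)) →
      ∀ w σ, Sat M w σ φ ↔ Sat M' (g w) σ φ := by
  induction φ with
  | eq t t' =>
    intro W W' M M' g hR hρ hη w σ
    simp [Sat, tval_congr M M' g hη σ w]
  | pred p ts =>
    intro W W' M M' g hR hρ hη w σ
    simp only [Sat, tval_congr M M' g hη σ w, hρ]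
  | neg ψ ih =>
    intro W W' M M' g hR hρ hη w σ
    simp only [Sat, ih M M' g hR hρ hη w σ]
  | and ψ χ ih1 ih2 =>
    intro W W' M M' g hR hρ hη w σ
    simp only [Sat, ih1 M M' g hR hρ hη w σ, ih2 M M' g hR hρ hη w σ]
  | K i ψ ih =>
    intro W W' M M' g hR hρ hη w σ
    simp only [Sat]
    constructor
    · intro h v' hr
      have := h (g.symm v') (by rw [hR]; simpa using hr)
      simpa using (ih M M' g hR hρ hη (g.symm v') σ).mp this
    · intro h v hr
      exact (ih M M' g hR hρ hη v σ).mpr (h (g v) ((hR i w v).mp hr))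
  | assign x t ψ ih =>
    intro W W' M M' g hR hρ hη w σ
    simp only [Sat, tval_congr M M' g hη σ w]
    exact ih M M' g hR hρ hη w _
  | upd m relm prem f ψ ihpre ihψ =>
    intro W W' M M' g hR hρ hη w σ
    simp only [Sat]
    have hpre : ∀ (v : W) (f' : Fin m),
        Sat M v σ (prem f') ↔ Sat M' (g v) σ (prem f') :=
      fun v f' => ihpre f' M M' g hR hρ hη v σ
    let g2 : {p : W × Fin m // Sat M p.1 σ (prem p.2)} ≃
        {p : W' × Fin m // Sat M' p.1 σ (prem p.2)} :=
      (g.prodCongr (Equiv.refl (Fin m))).subtypeEquiv (fun p => hpre p.1 p.2)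
    have key := ihψ (M.product m relm (fun v f' => Sat M v σ (prem f')))
      (M'.product m relm (fun v f' => Sat M' v σ (prem f'))) g2
      (by intro i a b; simp [Model.product, g2, hR, Equiv.subtypeEquiv])
      (by intro p a; simp [Model.product, g2, hρ, Equiv.subtypeEquiv])
      (by intro a v; simp [Model.product, g2, hη, Equiv.subtypeEquiv])
    constructor
    · intro h hp
      exact (key ⟨(w, f), (hpre w f).mpr hp⟩ σ).mp (h _)
    · intro h hp
      exact (key ⟨(w, f), hp⟩ σ).mpr (h ((hpre w f).mp hp))

/-- Event model composition UCOM: [E,e][E',e']φ ↔ [E∘E',(e,e')]φ. -/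
theorem ucom_valid [DecidableEq V] {W : Type} (M : Model W D N P I)
    (w : W) (σ : V → D) (n n' : ℕ)
    (rel : I → Fin n → Fin n → Prop) (rel' : I → Fin n' → Fin n' → Prop)
    (pre : Fin n → DForm V N P I) (pre' : Fin n' → DForm V N P I)
    (e : Fin n) (e' : Fin n') (φ : DForm V N P I) :
    Sat M w σ (.upd n rel pre e (.upd n' rel' pre' e' φ)) ↔
      Sat M w σ (.upd (n * n') (evRelComp rel rel') (evPreComp rel pre pre')
        (finProdFinEquiv (e, e')) φ) := by

  simp only [Sat, evPreComp, Equiv.symm_apply_apply]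
  set P := M.product n rel (fun v f => Sat M v σ (pre f)) with hP
  set cond' : {p : W × Fin n // Sat M p.1 σ (pre p.2)} → Fin n' → Prop :=
    fun v f' => Sat P v σ (pre' f') with hcond'
  set condC : W → Fin (n * n') → Prop :=
    fun v k => Sat M v σ (evPreComp rel pre pre' k) with hcondC
  have hcondC' : ∀ (v : W) (k : Fin (n * n')),
      condC v k = (Sat M v σ (pre (finProdFinEquiv.symm k).1) ∧
        ∀ h : Sat M v σ (pre (finProdFinEquiv.symm k).1),
          Sat P ⟨(v, (finProdFinEquiv.symm k).1), h⟩ σ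
            (pre' (finProdFinEquiv.symm k).2)) := by
    intro v k; rfl
  let G : {q : {p : W × Fin n // Sat M p.1 σ (pre p.2)} × Fin n' // cond' q.1 q.2} ≃
      {p : W × Fin (n * n') // condC p.1 p.2} :=
    { toFun := fun q => ⟨(q.1.1.1.1, finProdFinEquiv (q.1.1.1.2, q.1.2)), by
        rw [hcondC']
        simp only [Equiv.symm_apply_apply]
        exact ⟨q.1.1.2, fun _ => q.2⟩⟩
      invFun := fun p => by
        have h := p.2
        rw [hcondC'] at h
        exact ⟨(⟨(p.1.1, (finProdFinEquiv.symm p.1.2).1), h.1⟩,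
          (finProdFinEquiv.symm p.1.2).2), h.2 h.1⟩
      left_inv := fun q => by
        apply Subtype.ext; apply Prod.ext
        · apply Subtype.ext; simp
        · simp
      right_inv := fun p => by
        apply Subtype.ext; apply Prod.ext
        · rfl
        · exact finProdFinEquiv.apply_symm_apply _ }
  have key := sat_congr φ (P.product n' rel' cond')
    (M.product (n * n') (evRelComp rel rel') condC) G
    (by
      intro i a b
      simp only [Model.product, G, Equiv.coe_fn_mk, evRelComp,
        Equiv.symm_apply_apply, hP]
      tauto)
    (by intro p a; rfl)
    (by intro a v; rfl)
  constructor
  · intro h hp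
    have h1 := h hp.1
    have h2 := h1 (hp.2 hp.1)
    exact (key ⟨(⟨(w, e), hp.1⟩, e'), hp.2 hp.1⟩ σ).mp h2
  · intro h hp hp'
    have := h ⟨hp, fun _ => hp'⟩
    exact (key ⟨(⟨(w, e), hp⟩, e'), hp'⟩ σ).mpr this
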